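/- Let Σ_x be a real symmetric d×d matrix with orthogonal eigenspace decomposition ℝ^d = V₁ ⊕ … ⊕ V_r into eigenspaces with pairwise distinct eigenvalues, and let 𝒢 = {G ∈ O(d) : Gᵀ Σ_x G = Σ_x}. If a real symmetric d×d matrix Σ_w satisfies Gᵀ Σ_w G = Σ_w for every G ∈ 𝒢, then Σ_w is aligned with Σ_x, i.e., each eigenspace V_i of Σ_x is contained in an eigenspace of Σ_w. -/

import Mathlib

/-!
For an eigenvector `v` of `Sx`, the Householder reflection in `v⊥` is orthogonal and commutes
with `Sx`, so by hypothesis it also commutes with `Sw`. As it negates exactly the line through `v`,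
`Sw` maps `v` into that line. Thus every vector of an eigenspace of `Sx` is an eigenvector of `Sw`,
and an endomorphism under which every vector of a subspace is an eigenvector acts on that subspace
as a scalar.
-/

open Matrix

/-- Eigenspace of a `d × d` real matrix `A` for the (potential) eigenvalue `μ`. -/
noncomputable def eigSp {d : ℕ} (A : Matrix (Fin d) (Fin d) ℝ) (μ : ℝ) :
    Submodule ℝ (Fin d → ℝ) :=
  Module.End.eigenspace A.mulVecLin μ

/-- `A` is aligned with `B` if every eigenspace of `B` is contained in an eigenspace of `A`. -/
def IsAligned {d : ℕ} (A B : Matrix (Fin d) (Fin d) ℝ) : Prop :=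
  ∀ μ : ℝ, ∃ ν : ℝ, eigSp B μ ≤ eigSp A ν

theorem Module.End.exists_le_eigenspace_of_forall_mem_eq_smul {K V : Type*} [Field K]
    [AddCommGroup V] [Module K V] (f : Module.End K V) (E : Submodule K V)
    (h : ∀ v ∈ E, ∃ c : K, f v = c • v) : ∃ a : K, E ≤ f.eigenspace a := by
  have hmaps : Set.MapsTo f E E := fun v hv ↦ by
    obtain ⟨c, hc⟩ := h v hv
    exact hc ▸ E.smul_mem c hv
  obtain ⟨a, ha⟩ := (f.restrict hmaps).exists_eq_smul_id_of_forall_notLinearIndependent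
    fun v hli ↦ by
      obtain ⟨c, hc⟩ := h v v.2
      have hfv : f.restrict hmaps v = c • v := Subtype.ext hc
      rw [LinearIndependent.pair_iff] at hli
      simpa using (hli c (-1) (by simp [hfv])).2
  exact ⟨a, fun v hv ↦ Module.End.mem_eigenspace_iff.2
    (congrArg Subtype.val (LinearMap.congr_fun ha ⟨v, hv⟩))⟩

namespace Matrix

variable {K n : Type*} [Field K] [Fintype n] [DecidableEq n]

/-- The reflection in the hyperplane `v⊥`; it degenerates to `1` when `v ⬝ᵥ v = 0`. -/
def householder (v : n → K) : Matrix n n K :=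
  1 - (2 / (v ⬝ᵥ v)) • vecMulVec v v

theorem transpose_householder (v : n → K) : (householder v)ᵀ = householder v := by
  simp [householder, transpose_vecMulVec]

theorem householder_mulVec (v w : n → K) :
    householder v *ᵥ w = w - (2 * (v ⬝ᵥ w) / (v ⬝ᵥ v)) • v := by
  rw [householder, sub_mulVec, one_mulVec, smul_mulVec, vecMulVec_mulVec, op_smul_eq_smul,
    smul_smul, div_mul_eq_mul_div, mul_comm]

theorem householder_mulVec_self {v : n → K} (hv : v ⬝ᵥ v ≠ 0) :
    householder v *ᵥ v = -v := by
  rw [householder_mulVec, mul_div_assoc, div_self hv, mul_one, two_smul, sub_add_cancel_left]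

theorem householder_mul_self {v : n → K} (hv : v ⬝ᵥ v ≠ 0) :
    householder v * householder v = 1 := by
  have hcoeff : 2 / (v ⬝ᵥ v) * (2 / (v ⬝ᵥ v) * (v ⬝ᵥ v)) = 2 / (v ⬝ᵥ v) + 2 / (v ⬝ᵥ v) := by
    field_simp; ring
  simp only [householder, sub_mul, mul_sub, one_mul, mul_one, Matrix.smul_mul, Matrix.mul_smul,
    vecMulVec_mul_vecMulVec, vecMulVec_smul, smul_smul, hcoeff, add_smul]
  abel

theorem commute_householder {S : Matrix n n K} (hS : S.IsSymm) {v : n → K} {μ : K}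
    (hv : S *ᵥ v = μ • v) : Commute S (householder v) := by
  have hvS : v ᵥ* S = μ • v := by rw [← mulVec_transpose, hS.eq, hv]
  simp only [Commute, SemiconjBy, householder, mul_sub, sub_mul, mul_one, one_mul, Matrix.mul_smul,
    Matrix.smul_mul, mul_vecMulVec, vecMulVec_mul, hv, hvS, smul_vecMulVec, vecMulVec_smul]

theorem mulVec_eq_smul_of_householder_conj [NeZero (2 : K)] {A : Matrix n n K} {v : n → K}
    (hv : v ⬝ᵥ v ≠ 0) (hA : (householder v)ᵀ * A * householder v = A) :
    A *ᵥ v = ((v ⬝ᵥ A *ᵥ v) / (v ⬝ᵥ v)) • v := by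
  have hreflect := congrArg (· *ᵥ v) hA
  simp only [transpose_householder, ← mulVec_mulVec, householder_mulVec_self hv, mulVec_neg,
    householder_mulVec] at hreflect
  apply smul_right_injective _ (two_ne_zero : (2 : K) ≠ 0)
  simp only [smul_smul, ← mul_div_assoc]
  linear_combination (norm := module) -hreflect

end Matrix

theorem mem_eigSp {d : ℕ} {A : Matrix (Fin d) (Fin d) ℝ} {μ : ℝ} {x : Fin d → ℝ} :
    x ∈ eigSp A μ ↔ A *ᵥ x = μ • x :=
  Module.End.mem_eigenspace_iff

theorem aligned_of_invariant_under_stabilizer_general {d : ℕ}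
    (Sx Sw : Matrix (Fin d) (Fin d) ℝ) (hx : Sx.IsSymm)
    (h : ∀ G : Matrix (Fin d) (Fin d) ℝ, Gᵀ * G = 1 → Gᵀ * Sx * G = Sx →
      Gᵀ * Sw * G = Sw) :
    IsAligned Sw Sx := by
  intro μ
  refine Module.End.exists_le_eigenspace_of_forall_mem_eq_smul Sw.mulVecLin _ fun v hv ↦ ?_
  rcases eq_or_ne v 0 with rfl | hv0
  · exact ⟨0, by simp⟩
  have hvv : v ⬝ᵥ v ≠ 0 := fun h0 ↦ hv0 (dotProduct_self_eq_zero.1 h0)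
  have hG : (householder v)ᵀ * householder v = 1 := by
    rw [transpose_householder, householder_mul_self hvv]
  have hSx : (householder v)ᵀ * Sx * householder v = Sx := by
    rw [transpose_householder, (commute_householder hx (mem_eigSp.1 hv)).symm.eq, mul_assoc,
      householder_mul_self hvv, mul_one]
  exact ⟨_, mulVec_eq_smul_of_householder_conj hvv (h _ hG hSx)⟩

/-- If a real symmetric matrix `Sw` is invariant under every orthogonal matrix
`G` that leaves the real symmetric matrix `Sx` invariant, then `Sw` is aligned with `Sx`. -/
theorem aligned_of_invariant_under_stabilizer {d : ℕ}
    (Sx Sw : Matrix (Fin d) (Fin d) ℝ) (hx : Sx.IsSymm) (hw : Sw.IsSymm)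
    (h : ∀ G : Matrix (Fin d) (Fin d) ℝ, Gᵀ * G = 1 → Gᵀ * Sx * G = Sx →
      Gᵀ * Sw * G = Sw) :
    IsAligned Sw Sx :=
  aligned_of_invariant_under_stabilizer_general Sx Sw hx h
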